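/- Let Γ = [N]^p (p ∈ {1,2,3}), Λ = [2k+1]^p with 2k+1 ≤ N and d := |Λ|, and for i ∈ Γ let Λ_i be Λ translated to be centered at i. Let E ⊂ ℝ be bounded with |x| ≤ M for all x ∈ E, and for each i ∈ Γ let f_i : ℝ^{Λ_i∩Γ} → ℝ be PL(2) with constant L_i ≤ L. Define F : E^Γ → ℝ by F(x) := Σ_{i∈Γ} f_i(x_{Λ_i∩Γ}), and for each site i ∈ Γ let δ_i(F) := sup{ |F(ξ) − F(ξ')| : ξ, ξ' ∈ E^Γ with ξ_j = ξ'_j for all j ≠ i } be the variation of F at site i. Then δ_i(F) ≤ 2 d^{3/2} L M (1 + 2√d M) for every i ∈ Γ, and consequently Σ_{i∈Γ} (δ_i(F))² ≤ |Γ| · (2 d^{3/2} L M (1 + 2√d M))². -/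

import Mathlib

noncomputable section

/-- The lattice `Γ = [N]^p`. -/
abbrev Idx (p N : ℕ) := Fin p → Fin N

/-- The window shape `Λ = [2k+1]^p`. -/
abbrev Win (p k : ℕ) := Fin p → Fin (2 * k + 1)

/-- The absolute lattice position of window coordinate `j` of the window `Λ_i` centered at
`i`, when it lies inside `Γ`; `none` when it falls outside `Γ`. -/
def winIdx? (p N k : ℕ) (i : Idx p N) (j : Win p k) : Option (Idx p N) :=
  if h : ∀ c, 0 ≤ (i c : ℤ) + (j c : ℤ) - (k : ℤ) ∧ (i c : ℤ) + (j c : ℤ) - (k : ℤ) < (N : ℤ)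
  then some (fun c => ⟨((i c : ℤ) + (j c : ℤ) - (k : ℤ)).toNat, by
    obtain ⟨h1, h2⟩ := h c; omega⟩)
  else none

/-- The restriction `x_{Λ_i ∩ Γ}` of a configuration `x : Γ → ℝ` to the part of the window
`Λ_i` lying inside `Γ`. -/
def winRestrict (p N k : ℕ) (x : Idx p N → ℝ) (i : Idx p N) :
    {j : Win p k // (winIdx? p N k i j).isSome} → ℝ :=
  fun j => x ((winIdx? p N k i j.val).get j.prop)

/-- The variation `δ_i(F)` at site `i` of `F(x) = ∑_ℓ f_ℓ(x_{Λ_ℓ ∩ Γ})`, over configurations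
with values in `E` agreeing off `i`. -/
def siteVariation (p N k : ℕ) (E : Set ℝ)
    (f : ∀ ℓ : Idx p N, EuclideanSpace ℝ {j : Win p k // (winIdx? p N k ℓ j).isSome} → ℝ)
    (i : Idx p N) : ℝ :=
  ⨆ ξ : {ξξ : (Idx p N → ℝ) × (Idx p N → ℝ) //
      (∀ ℓ, ξξ.1 ℓ ∈ E) ∧ (∀ ℓ, ξξ.2 ℓ ∈ E) ∧ ∀ j, j ≠ i → ξξ.1 j = ξξ.2 j},
    |(∑ ℓ, f ℓ (WithLp.toLp 2 (winRestrict p N k ξ.val.1 ℓ))) - ∑ ℓ, f ℓ (WithLp.toLp 2 (winRestrict p N k ξ.val.2 ℓ))|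

/-!
Changing the configuration at the single site `i` only moves the windows that contain `i`, and
there are at most `d` of them, since such a window is determined by the position of `i` in it.
In each moved window the two restrictions differ in one coordinate, by at most `2M`, and have
Euclidean norm at most `√d M`, so the PL(2) bound moves that term by at most `L (1 + 2√d M) 2M`.
Summing over the moved windows gives `d L (1 + 2√d M) 2M`, which is the claimed bound up to the
factor `√d ≥ 1`.
-/

open Finset

def PseudoLipschitzWith {α : Type*} [SeminormedAddCommGroup α] (L : ℝ) (g : α → ℝ) : Prop :=
  ∀ x y, |g x - g y| ≤ L * (1 + ‖x‖ + ‖y‖) * ‖x - y‖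

namespace PseudoLipschitzWith

variable {α : Type*} [SeminormedAddCommGroup α] {g : α → ℝ} {K L : ℝ}

theorem mono (hg : PseudoLipschitzWith K g) (hKL : K ≤ L) : PseudoLipschitzWith L g :=
  fun x y => (hg x y).trans (by gcongr)

theorem abs_sub_le_of_norm_le (hg : PseudoLipschitzWith L g) (hL : 0 ≤ L) {x y : α} {R D : ℝ}
    (hx : ‖x‖ ≤ R) (hy : ‖y‖ ≤ R) (hxy : ‖x - y‖ ≤ D) : |g x - g y| ≤ L * (1 + 2 * R) * D := by
  have hR : 0 ≤ R := (norm_nonneg x).trans hx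
  calc |g x - g y| ≤ L * (1 + ‖x‖ + ‖y‖) * ‖x - y‖ := hg x y
    _ ≤ L * (1 + 2 * R) * D := by gcongr L * ?_ * ?_; linarith

end PseudoLipschitzWith

namespace EuclideanSpace

variable {ι : Type*} [Fintype ι]

theorem norm_le_sqrt_card_mul {x : EuclideanSpace ℝ ι} {M : ℝ} (hM : 0 ≤ M)
    (hx : ∀ i, |x i| ≤ M) : ‖x‖ ≤ √(Fintype.card ι) * M := by
  calc ‖x‖ = √(∑ i, ‖x i‖ ^ 2) := EuclideanSpace.norm_eq x
    _ ≤ √(∑ _ : ι, M ^ 2) := by gcongr with i; exact hx i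
    _ = √(Fintype.card ι) * M := by simp [Real.sqrt_mul, Real.sqrt_sq hM]

theorem norm_sub_eq_of_forall_ne [DecidableEq ι] {x y : EuclideanSpace ℝ ι} {j : ι}
    (h : ∀ i ≠ j, x i = y i) : ‖x - y‖ = |x j - y j| := by
  have hsingle : x - y = EuclideanSpace.single j (x j - y j) := by
    ext i
    by_cases hij : i = j
    · subst hij; simp
    · simp [hij, h i hij]
  rw [hsingle, PiLp.norm_single, Real.norm_eq_abs]

end EuclideanSpace

section Windows

variable {p N k : ℕ}

theorem winIdx?_coe_eq {ℓ i : Idx p N} {j : Win p k} (h : winIdx? p N k ℓ j = some i) (c : Fin p) :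
    (i c : ℤ) = ℓ c + j c - k := by
  unfold winIdx? at h
  split_ifs at h with hc
  obtain ⟨h0, -⟩ := hc c
  rw [← Option.some_injective _ h]
  simp only [Int.toNat_of_nonneg h0]

theorem winIdx?_left_unique {ℓ₁ ℓ₂ i : Idx p N} {j : Win p k}
    (h₁ : winIdx? p N k ℓ₁ j = some i) (h₂ : winIdx? p N k ℓ₂ j = some i) : ℓ₁ = ℓ₂ := by
  funext c
  have := winIdx?_coe_eq h₁ c
  have := winIdx?_coe_eq h₂ c
  exact Fin.ext (by omega)

theorem winIdx?_right_unique {ℓ i : Idx p N} {j₁ j₂ : Win p k}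
    (h₁ : winIdx? p N k ℓ j₁ = some i) (h₂ : winIdx? p N k ℓ j₂ = some i) : j₁ = j₂ := by
  funext c
  have := winIdx?_coe_eq h₁ c
  have := winIdx?_coe_eq h₂ c
  exact Fin.ext (by omega)

variable (p N k) in
def windowsContaining (i : Idx p N) : Finset (Idx p N) :=
  {ℓ | ∃ j : Win p k, winIdx? p N k ℓ j = some i}

theorem card_windowsContaining_le (i : Idx p N) :
    #(windowsContaining p N k i) ≤ Fintype.card (Win p k) := by
  refine card_le_card_of_forall_subsingleton (fun ℓ j => winIdx? p N k ℓ j = some i)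
    (fun ℓ hℓ => ?_) (fun j _ ℓ₁ h₁ ℓ₂ h₂ => winIdx?_left_unique h₁.2 h₂.2)
  obtain ⟨j, hj⟩ := (mem_filter.mp hℓ).2
  exact ⟨j, mem_univ j, hj⟩

theorem winRestrict_apply_eq_of_ne {ξ ξ' : Idx p N → ℝ} {i ℓ : Idx p N}
    (h : ∀ m, m ≠ i → ξ m = ξ' m) (j : {j : Win p k // (winIdx? p N k ℓ j).isSome})
    (hj : winIdx? p N k ℓ j ≠ some i) : winRestrict p N k ξ ℓ j = winRestrict p N k ξ' ℓ j :=
  h _ fun hi => hj (hi ▸ (Option.some_get j.2).symm)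

end Windows

section WindowedSum

variable {p N k : ℕ} {M : ℝ} {ξ ξ' : Idx p N → ℝ}

theorem norm_toLp_winRestrict_le (hM : 0 ≤ M) (hξ : ∀ m, |ξ m| ≤ M) (ℓ : Idx p N) :
    ‖WithLp.toLp 2 (winRestrict p N k ξ ℓ)‖ ≤ √(Fintype.card (Win p k)) * M :=
  calc _ ≤ √(Fintype.card {j : Win p k // (winIdx? p N k ℓ j).isSome}) * M :=
        EuclideanSpace.norm_le_sqrt_card_mul hM fun _ => hξ _
    _ ≤ _ := by gcongr; exact Fintype.card_subtype_le _

theorem norm_toLp_winRestrict_sub_le {i ℓ : Idx p N} (hξ : ∀ m, |ξ m| ≤ M)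
    (hξ' : ∀ m, |ξ' m| ≤ M) (h : ∀ m, m ≠ i → ξ m = ξ' m)
    (hℓ : ℓ ∈ windowsContaining p N k i) :
    ‖WithLp.toLp 2 (winRestrict p N k ξ ℓ) - WithLp.toLp 2 (winRestrict p N k ξ' ℓ)‖ ≤ 2 * M := by
  classical
  obtain ⟨j, hj⟩ := (mem_filter.mp hℓ).2
  have hjs : (winIdx? p N k ℓ j).isSome := by rw [hj]; rfl
  rw [EuclideanSpace.norm_sub_eq_of_forall_ne (j := ⟨j, hjs⟩) fun j' hj' =>
    winRestrict_apply_eq_of_ne h j' fun h' => hj' (Subtype.ext (winIdx?_right_unique h' hj))]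
  calc |_ - _| ≤ |_| + |_| := abs_sub _ _
    _ ≤ M + M := add_le_add (hξ _) (hξ' _)
    _ = 2 * M := (two_mul M).symm

variable (p N k) in
def windowedSum
    (f : ∀ ℓ : Idx p N, EuclideanSpace ℝ {j : Win p k // (winIdx? p N k ℓ j).isSome} → ℝ)
    (ξ : Idx p N → ℝ) : ℝ :=
  ∑ ℓ, f ℓ (WithLp.toLp 2 (winRestrict p N k ξ ℓ))

theorem abs_windowedSum_sub_le
    {f : ∀ ℓ : Idx p N, EuclideanSpace ℝ {j : Win p k // (winIdx? p N k ℓ j).isSome} → ℝ}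
    {L : ℝ} (hf : ∀ ℓ, PseudoLipschitzWith L (f ℓ)) (hL : 0 ≤ L) (hM : 0 ≤ M) {i : Idx p N}
    (hξ : ∀ m, |ξ m| ≤ M) (hξ' : ∀ m, |ξ' m| ≤ M) (h : ∀ m, m ≠ i → ξ m = ξ' m) :
    |windowedSum p N k f ξ - windowedSum p N k f ξ'| ≤
      Fintype.card (Win p k) * (L * (1 + 2 * (√(Fintype.card (Win p k)) * M)) * (2 * M)) := by
  set S := windowsContaining p N k i
  set Δ : Idx p N → ℝ := fun ℓ =>
    f ℓ (WithLp.toLp 2 (winRestrict p N k ξ ℓ)) - f ℓ (WithLp.toLp 2 (winRestrict p N k ξ' ℓ))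
  have hΔ_out : ∀ ℓ ∉ S, Δ ℓ = 0 := by
    intro ℓ hℓ
    have hrestrict : winRestrict p N k ξ ℓ = winRestrict p N k ξ' ℓ := funext fun j =>
      winRestrict_apply_eq_of_ne h j fun hj => hℓ (mem_filter.mpr ⟨mem_univ ℓ, j, hj⟩)
    simp only [Δ, hrestrict, sub_self]
  have hΔ_in : ∀ ℓ ∈ S, |Δ ℓ| ≤ L * (1 + 2 * (√(Fintype.card (Win p k)) * M)) * (2 * M) :=
    fun ℓ hℓ => (hf ℓ).abs_sub_le_of_norm_le hL (norm_toLp_winRestrict_le hM hξ ℓ)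
      (norm_toLp_winRestrict_le hM hξ' ℓ) (norm_toLp_winRestrict_sub_le hξ hξ' h hℓ)
  calc |windowedSum p N k f ξ - windowedSum p N k f ξ'|
      = |∑ ℓ ∈ S, Δ ℓ| := by
        rw [windowedSum, windowedSum, ← sum_sub_distrib,
          ← sum_subset (subset_univ S) fun ℓ _ hℓ => hΔ_out ℓ hℓ]
    _ ≤ ∑ ℓ ∈ S, |Δ ℓ| := abs_sum_le_sum_abs _ _
    _ ≤ #S • (L * (1 + 2 * (√(Fintype.card (Win p k)) * M)) * (2 * M)) :=
        sum_le_card_nsmul _ _ _ hΔ_in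
    _ ≤ _ := by
        rw [nsmul_eq_mul]
        have hS : (#S : ℝ) ≤ Fintype.card (Win p k) := mod_cast card_windowsContaining_le i
        gcongr

end WindowedSum

theorem site_variation_bound_general
    (p : ℕ) (k N : ℕ)
    (E : Set ℝ) (M : ℝ) (hM : 0 ≤ M) (hME : ∀ x ∈ E, |x| ≤ M)
    (L : ℝ) (hL : 0 < L)
    (f : ∀ ℓ : Idx p N, EuclideanSpace ℝ {j : Win p k // (winIdx? p N k ℓ j).isSome} → ℝ)
    (Lc : Idx p N → ℝ) (hLc : ∀ ℓ, 0 < Lc ℓ ∧ Lc ℓ ≤ L)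
    (hf : ∀ ℓ, ∀ x y : EuclideanSpace ℝ {j : Win p k // (winIdx? p N k ℓ j).isSome},
      |f ℓ x - f ℓ y| ≤ Lc ℓ * (1 + ‖x‖ + ‖y‖) * ‖x - y‖) :
    (∀ i : Idx p N, siteVariation p N k E f i ≤
        2 * ((Fintype.card (Win p k) : ℝ) * Real.sqrt (Fintype.card (Win p k))) * L * M *
          (1 + 2 * Real.sqrt (Fintype.card (Win p k)) * M)) ∧
      ∑ i : Idx p N, (siteVariation p N k E f i) ^ 2 ≤
        (Fintype.card (Idx p N) : ℝ) *
          (2 * ((Fintype.card (Win p k) : ℝ) * Real.sqrt (Fintype.card (Win p k))) * L * M *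
            (1 + 2 * Real.sqrt (Fintype.card (Win p k)) * M)) ^ 2 := by
  set d : ℝ := (Fintype.card (Win p k) : ℝ)
  set B := 2 * (d * √d) * L * M * (1 + 2 * √d * M)
  have hPL : ∀ ℓ, PseudoLipschitzWith L (f ℓ) := fun ℓ => PseudoLipschitzWith.mono (hf ℓ) (hLc ℓ).2
  have hsqrt_d : 1 ≤ √d := Real.one_le_sqrt.mpr (Nat.one_le_cast.mpr Fintype.card_pos)
  have hB : d * (L * (1 + 2 * (√d * M)) * (2 * M)) ≤ B :=
    calc _ = d * (L * (1 + 2 * (√d * M)) * (2 * M)) * 1 := by ring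
      _ ≤ d * (L * (1 + 2 * (√d * M)) * (2 * M)) * √d := by gcongr
      _ = B := by ring
  have hB_nonneg : 0 ≤ B := by positivity
  have hδ : ∀ i, siteVariation p N k E f i ≤ B := fun i =>
    Real.iSup_le (fun ξ => (abs_windowedSum_sub_le hPL hL.le hM (fun m => hME _ (ξ.2.1 m))
      (fun m => hME _ (ξ.2.2.1 m)) ξ.2.2.2).trans hB) hB_nonneg
  refine ⟨hδ, ?_⟩
  calc ∑ i, siteVariation p N k E f i ^ 2 ≤ #(univ : Finset (Idx p N)) • B ^ 2 :=
        sum_le_card_nsmul _ _ _ fun i _ =>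
          pow_le_pow_left₀ (Real.iSup_nonneg fun _ => abs_nonneg _) (hδ i) 2
    _ = _ := by rw [nsmul_eq_mul, card_univ]

/-- **Site-variation bound for sums of windowed PL(2) functions (key estimate for Külske's
concentration inequality).**  If each `f_i` is PL(2) with constant `L_i ≤ L` and the state
space `E` is bounded by `M`, then `δ_i(F) ≤ 2 d^{3/2} L M (1 + 2√d M)` for every site `i`,
and hence `∑_i δ_i(F)² ≤ |Γ| (2 d^{3/2} L M (1 + 2√d M))²`. -/
theorem site_variation_bound
    (p : ℕ) (hp : p = 1 ∨ p = 2 ∨ p = 3) (k N : ℕ) (hN : 2 * k + 1 ≤ N)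
    (E : Set ℝ) (M : ℝ) (hM : 0 ≤ M) (hME : ∀ x ∈ E, |x| ≤ M)
    (L : ℝ) (hL : 0 < L)
    (f : ∀ ℓ : Idx p N, EuclideanSpace ℝ {j : Win p k // (winIdx? p N k ℓ j).isSome} → ℝ)
    (Lc : Idx p N → ℝ) (hLc : ∀ ℓ, 0 < Lc ℓ ∧ Lc ℓ ≤ L)
    (hf : ∀ ℓ, ∀ x y : EuclideanSpace ℝ {j : Win p k // (winIdx? p N k ℓ j).isSome},
      |f ℓ x - f ℓ y| ≤ Lc ℓ * (1 + ‖x‖ + ‖y‖) * ‖x - y‖) :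
    (∀ i : Idx p N, siteVariation p N k E f i ≤
        2 * ((Fintype.card (Win p k) : ℝ) * Real.sqrt (Fintype.card (Win p k))) * L * M *
          (1 + 2 * Real.sqrt (Fintype.card (Win p k)) * M)) ∧
      ∑ i : Idx p N, (siteVariation p N k E f i) ^ 2 ≤
        (Fintype.card (Idx p N) : ℝ) *
          (2 * ((Fintype.card (Win p k) : ℝ) * Real.sqrt (Fintype.card (Win p k))) * L * M *
            (1 + 2 * Real.sqrt (Fintype.card (Win p k)) * M)) ^ 2 :=
  site_variation_bound_general p k N E M hM hME L hL f Lc hLc hf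

end
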